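/- Let s₁, s₂, s₃ be probability distributions on [n] with pairwise total variation distances d(s₁,s₂) ≥ 0.95, d(s₁,s₃) ≥ 0.90, d(s₂,s₃) ≥ 0.90, and d((s₁+s₂)/2, s₃) ≥ 0.95. Define a 3×n 0/1 matrix R' by: for each column j, set R'_{i j} = 1 for each i ∈ argmax_{i'∈{1,2,3}} s_{i'}[j] (ties give 1 to all maximizers) and 0 otherwise. Then Σ_j R'_{1j} s₁[j] ≥ 0.85, Σ_j R'_{2j} s₁[j] ≤ 0.05, and Σ_j R'_{3j} s₁[j] ≤ 0.10; moreover Σ_j R'_{3j} s₃[j] ≥ 0.90 and Σ_{j: R'_{3j}=0} s₃[j] ≤ 0.10. -/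
import Mathlib


open Finset
open scoped Classical

/-- Total variation distance between two vectors on `Fin n`. -/
noncomputable def tv {n : ℕ} (x y : Fin n → ℝ) : ℝ := (1/2) * ∑ j, |x j - y j|

lemma min_sum_eq {n : ℕ} (x y : Fin n → ℝ)
    (hx : ∑ j, x j = 1) (hy : ∑ j, y j = 1) :
    ∑ j, min (x j) (y j) = 1 - tv x y := by
  have h : ∀ j : Fin n, min (x j) (y j) = (x j + y j - |x j - y j|) / 2 := by
    intro j; rcases le_total (x j) (y j) with h | h
    · rw [min_eq_left h, abs_of_nonpos (by linarith)]; ring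
    · rw [min_eq_right h, abs_of_nonneg (by linarith)]; ring
  simp_rw [h]
  have : ∑ j, (x j + y j - |x j - y j|) / 2
       = (∑ j, x j + ∑ j, y j - ∑ j, |x j - y j|) / 2 := by
    rw [← Finset.sum_div, Finset.sum_sub_distrib, Finset.sum_add_distrib]
  rw [this, hx, hy]; simp only [tv]; ring

lemma split_sum {n : ℕ} (x R : Fin n → ℝ)
    (hR : ∀ j, R j = 0 ∨ R j = 1) :
    ∑ j, R j * x j = ∑ j, x j - ∑ j ∈ Finset.univ.filter (fun j => R j = 0), x j := by
  classical
  have h1 : ∑ j, R j * x j = ∑ j ∈ Finset.univ.filter (fun j => ¬ R j = 0), x j := by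
    rw [← Finset.sum_filter_add_sum_filter_not Finset.univ (fun j => R j = 0)
      (fun j => R j * x j)]
    have a : ∑ j ∈ Finset.univ.filter (fun j => R j = 0), R j * x j = 0 := by
      apply Finset.sum_eq_zero
      intro j hj
      simp only [Finset.mem_filter] at hj
      rw [hj.2, zero_mul]
    rw [a, zero_add]
    apply Finset.sum_congr rfl
    intro j hj
    simp only [Finset.mem_filter] at hj
    rcases hR j with h | h
    · exact absurd h hj.2
    · rw [h, one_mul]
  rw [h1, eq_sub_iff_add_eq, add_comm,
    Finset.sum_filter_add_sum_filter_not Finset.univ (fun j => R j = 0) x]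

/-- The payoff-matrix construction of Case 1 of Theorem 3 (low commitment): given three
far-apart distributions `s₁, s₂, s₃`, the 3×n matrix `R'` putting a 1 in column `j` of
row `i` iff `sᵢ[j]` is maximal makes each row `i` a good response to `sᵢ` and a poor
response to the other two distributions. -/
theorem stmt_15 (n : ℕ) (s₁ s₂ s₃ : Fin n → ℝ)
    (h₁ : (∀ j, 0 ≤ s₁ j) ∧ ∑ j, s₁ j = 1)
    (h₂ : (∀ j, 0 ≤ s₂ j) ∧ ∑ j, s₂ j = 1)
    (h₃ : (∀ j, 0 ≤ s₃ j) ∧ ∑ j, s₃ j = 1)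
    (hd12 : tv s₁ s₂ ≥ 95/100) (hd13 : tv s₁ s₃ ≥ 90/100) (hd23 : tv s₂ s₃ ≥ 90/100)
    (hd123 : tv (fun j => (s₁ j + s₂ j) / 2) s₃ ≥ 95/100)
    (s : Fin 3 → Fin n → ℝ)
    (hs : s 0 = s₁ ∧ s 1 = s₂ ∧ s 2 = s₃)
    (R' : Fin 3 → Fin n → ℝ)
    (hR' : ∀ i j, R' i j = if (∀ i' : Fin 3, s i' j ≤ s i j) then 1 else 0) :
    (∑ j, R' 0 j * s₁ j ≥ 85/100) ∧
    (∑ j, R' 1 j * s₁ j ≤ 5/100) ∧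
    (∑ j, R' 2 j * s₁ j ≤ 10/100) ∧
    (∑ j, R' 2 j * s₃ j ≥ 90/100) ∧
    (∑ j ∈ Finset.univ.filter (fun j => R' 2 j = 0), s₃ j ≤ 10/100) := by
  obtain ⟨hs0, hs1, hs2⟩ := hs
  obtain ⟨h1p, h1s⟩ := h₁
  obtain ⟨h2p, h2s⟩ := h₂
  obtain ⟨h3p, h3s⟩ := h₃
  have hRval : ∀ i j, R' i j = 0 ∨ R' i j = 1 := by
    intro i j; rw [hR' i j]; split <;> simp
  -- the min-sum bounds
  have hA : ∑ j, min (s₁ j) (s₂ j) ≤ 5/100 := by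
    rw [min_sum_eq s₁ s₂ h1s h2s]; linarith
  have hB : ∑ j, min (s₁ j) (s₃ j) ≤ 10/100 := by
    rw [min_sum_eq s₁ s₃ h1s h3s]; linarith
  have hmsum : ∑ j, (s₁ j + s₂ j) / 2 = 1 := by
    rw [← Finset.sum_div, Finset.sum_add_distrib, h1s, h2s]; norm_num
  have hD : ∑ j, min ((s₁ j + s₂ j) / 2) (s₃ j) ≤ 5/100 := by
    have := min_sum_eq (fun j => (s₁ j + s₂ j) / 2) s₃ hmsum h3s
    rw [this]; linarith
  -- Claim 2
  have c2 : ∑ j, R' 1 j * s₁ j ≤ 5/100 := by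
    calc ∑ j, R' 1 j * s₁ j ≤ ∑ j, min (s₁ j) (s₂ j) := by
          apply Finset.sum_le_sum
          intro j _
          rw [hR' 1 j]
          split
          · rename_i h
            have := h 0
            rw [hs0, hs1] at this
            rw [one_mul, min_eq_left this]
          · rw [zero_mul]
            exact le_min (h1p j) (h2p j)
      _ ≤ 5/100 := hA
  -- Claim 3
  have c3 : ∑ j, R' 2 j * s₁ j ≤ 10/100 := by
    calc ∑ j, R' 2 j * s₁ j ≤ ∑ j, min (s₁ j) (s₃ j) := by
          apply Finset.sum_le_sum
          intro j _
          rw [hR' 2 j]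
          split
          · rename_i h
            have := h 0
            rw [hs0, hs2] at this
            rw [one_mul, min_eq_left this]
          · rw [zero_mul]
            exact le_min (h1p j) (h3p j)
      _ ≤ 10/100 := hB
  -- Claim 5
  have c5 : ∑ j ∈ Finset.univ.filter (fun j => R' 2 j = 0), s₃ j ≤ 10/100 := by
    have step : ∑ j ∈ Finset.univ.filter (fun j => R' 2 j = 0), s₃ j
        ≤ ∑ j ∈ Finset.univ.filter (fun j => R' 2 j = 0),
            2 * min ((s₁ j + s₂ j) / 2) (s₃ j) := by
      apply Finset.sum_le_sum
      intro j hj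
      simp only [Finset.mem_filter] at hj
      have hz := hj.2
      rw [hR' 2 j] at hz
      by_cases hcond : ∀ i' : Fin 3, s i' j ≤ s 2 j
      · simp [hcond] at hz
      · push_neg at hcond
        obtain ⟨i', hi'⟩ := hcond
        have hlt : s₃ j < s₁ j + s₂ j := by
          have htri : i' = 0 ∨ i' = 1 ∨ i' = 2 := by omega
          rcases htri with rfl | rfl | rfl <;> rw [hs2] at hi'
          · rw [hs0] at hi'; nlinarith [h2p j]
          · rw [hs1] at hi'; nlinarith [h1p j]
          · exact absurd hi' (lt_irrefl _)
        have hm : s₃ j / 2 ≤ min ((s₁ j + s₂ j) / 2) (s₃ j) := by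
          apply le_min
          · linarith
          · linarith [h3p j]
        linarith
    have step2 : ∑ j ∈ Finset.univ.filter (fun j => R' 2 j = 0),
            2 * min ((s₁ j + s₂ j) / 2) (s₃ j)
        ≤ ∑ j, 2 * min ((s₁ j + s₂ j) / 2) (s₃ j) := by
      apply Finset.sum_le_sum_of_subset_of_nonneg (Finset.filter_subset _ _)
      intro j _ _
      have : (0:ℝ) ≤ min ((s₁ j + s₂ j) / 2) (s₃ j) :=
        le_min (by linarith [h1p j, h2p j]) (h3p j)
      linarith
    have step3 : ∑ j, 2 * min ((s₁ j + s₂ j) / 2) (s₃ j) ≤ 10/100 := by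
      rw [← Finset.mul_sum]; linarith
    linarith
  -- Claim 4
  have c4 : ∑ j, R' 2 j * s₃ j ≥ 90/100 := by
    rw [split_sum s₃ (R' 2) (hRval 2), h3s]
    linarith
  -- Claim 1
  have c1 : ∑ j, R' 0 j * s₁ j ≥ 85/100 := by
    rw [split_sum s₁ (R' 0) (hRval 0), h1s]
    have step : ∑ j ∈ Finset.univ.filter (fun j => R' 0 j = 0), s₁ j
        ≤ ∑ j ∈ Finset.univ.filter (fun j => R' 0 j = 0),
            (min (s₁ j) (s₂ j) + min (s₁ j) (s₃ j)) := by
      apply Finset.sum_le_sum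
      intro j hj
      simp only [Finset.mem_filter] at hj
      have hz := hj.2
      rw [hR' 0 j] at hz
      by_cases hcond : ∀ i' : Fin 3, s i' j ≤ s 0 j
      · simp [hcond] at hz
      · push_neg at hcond
        obtain ⟨i', hi'⟩ := hcond
        have m2 : (0:ℝ) ≤ min (s₁ j) (s₂ j) := le_min (h1p j) (h2p j)
        have m3 : (0:ℝ) ≤ min (s₁ j) (s₃ j) := le_min (h1p j) (h3p j)
        have htri : i' = 0 ∨ i' = 1 ∨ i' = 2 := by omega
        rcases htri with rfl | rfl | rfl <;> rw [hs0] at hi'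
        · exact absurd hi' (lt_irrefl _)
        · rw [hs1] at hi'
          rw [min_eq_left hi'.le] at m2 ⊢
          linarith
        · rw [hs2] at hi'
          rw [min_eq_left hi'.le] at m3 ⊢
          linarith
    have step2 : ∑ j ∈ Finset.univ.filter (fun j => R' 0 j = 0),
            (min (s₁ j) (s₂ j) + min (s₁ j) (s₃ j))
        ≤ ∑ j, (min (s₁ j) (s₂ j) + min (s₁ j) (s₃ j)) := by
      apply Finset.sum_le_sum_of_subset_of_nonneg (Finset.filter_subset _ _)
      intro j _ _
      have m2 : (0:ℝ) ≤ min (s₁ j) (s₂ j) := le_min (h1p j) (h2p j)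
      have m3 : (0:ℝ) ≤ min (s₁ j) (s₃ j) := le_min (h1p j) (h3p j)
      linarith
    have step3 : ∑ j, (min (s₁ j) (s₂ j) + min (s₁ j) (s₃ j)) ≤ 15/100 := by
      rw [Finset.sum_add_distrib]; linarith
    linarith
  exact ⟨c1, c2, c3, c4, c5⟩
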